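/- The invertible elements of s'(ℤ^d) are dense in s'(ℤ^d) in its weak-* topology as the dual of s(ℤ^d): for every a ∈ s'(ℤ^d), every finite family b₁, …, b_m ∈ s(ℤ^d), and every ε > 0, there exists u ∈ s'(ℤ^d) invertible in s'(ℤ^d) such that |∑_{n∈ℤ^d} (u(n) − a(n)) b_j(n)| < ε for every j = 1, …, m. (Consequently the topological stable rank of s'(ℤ^d) equals 1.) -/

import Mathlib

/-- The 1-norm of a lattice point `n ∈ ℤ^d`. -/
def norm1 {d : ℕ} (n : Fin d → ℤ) : ℝ := ∑ i, |(n i : ℝ)|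

/-- `a : ℤ^d → ℂ` has at most polynomial growth, i.e. belongs to `s'(ℤ^d)`. -/
def PolyGrowth {d : ℕ} (a : (Fin d → ℤ) → ℂ) : Prop :=
  ∃ M : ℝ, 0 < M ∧ ∃ k : ℕ, ∀ n : Fin d → ℤ, ‖a n‖ ≤ M * (1 + norm1 n) ^ k

/-- `b : ℤ^d → ℂ` is rapidly decreasing, i.e. belongs to `s(ℤ^d)`. -/
def RapidDecay {d : ℕ} (b : (Fin d → ℤ) → ℂ) : Prop :=
  ∀ k : ℕ, ∃ C : ℝ, ∀ n : Fin d → ℤ, (1 + norm1 n) ^ k * ‖b n‖ ≤ C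

/-- `a` is invertible in `s'(ℤ^d)`. -/
def IsInvertibleSprime {d : ℕ} (a : (Fin d → ℤ) → ℂ) : Prop :=
  PolyGrowth a ∧ ∃ b : (Fin d → ℤ) → ℂ, PolyGrowth b ∧ ∀ n, a n * b n = 1

/-!
Replace `a(n)` by a small positive number `c w(n)` wherever `|a(n)| < c w(n)`, where
`w(n) = ∏ᵢ (1 + |nᵢ|)⁻²` is summable over `ℤ^d` and `1 / w` grows polynomially. The result `u`
stays of polynomial growth, `1 / u ≤ 1 / (c w)` grows polynomially, and `|u - a| ≤ 2 c w`, so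
against the bounded sequences `b_j` the pairing changes by at most `2 c (sup |b_j|) ∑ w`.
-/

lemma summable_pi_prod_of_nonneg {α : Type*} {f : α → ℝ} (hf₀ : 0 ≤ f) (hf : Summable f) :
    ∀ d : ℕ, Summable fun n : Fin d → α => ∏ i, f (n i)
  | 0 => .of_finite
  | d + 1 => by
    refine (Equiv.summable_iff (Fin.consEquiv fun _ => α)).mp ?_
    refine (hf.mul_of_nonneg (summable_pi_prod_of_nonneg hf₀ hf d) hf₀
      fun _ => Finset.prod_nonneg fun i _ => hf₀ _).congr fun p => ?_
    simp [Fin.consEquiv, Fin.prod_univ_succ]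

lemma summable_inv_one_add_abs_sq : Summable fun m : ℤ => ((1 + |(m : ℝ)|) ^ 2)⁻¹ := by
  have hnat : Summable fun n : ℕ => ((1 + (n : ℝ)) ^ 2)⁻¹ := by
    refine ((summable_nat_add_iff 1).mpr (Real.summable_nat_pow_inv.mpr one_lt_two)).congr
      fun n => ?_
    push_cast
    ring_nf
  exact .of_nat_of_neg (hnat.congr fun n => by simp) (hnat.congr fun n => by simp)

lemma norm1_nonneg {d : ℕ} (n : Fin d → ℤ) : 0 ≤ norm1 n :=
  Finset.sum_nonneg fun _ _ => abs_nonneg _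

lemma abs_le_norm1 {d : ℕ} (n : Fin d → ℤ) (i : Fin d) : |(n i : ℝ)| ≤ norm1 n :=
  Finset.single_le_sum (f := fun i => |(n i : ℝ)|) (fun _ _ => abs_nonneg _) (Finset.mem_univ i)

noncomputable def latticeWeight {d : ℕ} (n : Fin d → ℤ) : ℝ := ∏ i, ((1 + |(n i : ℝ)|) ^ 2)⁻¹

lemma latticeWeight_pos {d : ℕ} (n : Fin d → ℤ) : 0 < latticeWeight n := by
  unfold latticeWeight; positivity

lemma latticeWeight_le_one {d : ℕ} (n : Fin d → ℤ) : latticeWeight n ≤ 1 :=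
  Finset.prod_le_one (fun i _ => by positivity) fun i _ =>
    inv_le_one_of_one_le₀ (one_le_pow₀ (le_add_of_nonneg_right (abs_nonneg _)))

lemma inv_latticeWeight_le {d : ℕ} (n : Fin d → ℤ) :
    (latticeWeight n)⁻¹ ≤ (1 + norm1 n) ^ (2 * d) := by
  rw [latticeWeight, ← Finset.prod_inv_distrib]
  simp only [inv_inv]
  calc ∏ i, (1 + |(n i : ℝ)|) ^ 2 ≤ ∏ _i : Fin d, (1 + norm1 n) ^ 2 :=
        Finset.prod_le_prod (fun i _ => by positivity) fun i _ => by
          gcongr; exact abs_le_norm1 n i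
    _ = (1 + norm1 n) ^ (2 * d) := by simp [← pow_mul, mul_comm]

lemma summable_latticeWeight (d : ℕ) : Summable fun n : Fin d → ℤ => latticeWeight n :=
  summable_pi_prod_of_nonneg (fun _ => by positivity) summable_inv_one_add_abs_sq d

lemma PolyGrowth.of_norm_le_add {d : ℕ} {a u : (Fin d → ℤ) → ℂ} {c : ℝ} (ha : PolyGrowth a)
    (hc : 0 ≤ c) (hu : ∀ n, ‖u n‖ ≤ ‖a n‖ + c) : PolyGrowth u := by
  obtain ⟨M, hM, k, haM⟩ := ha
  refine ⟨M + c, by positivity, k, fun n => ?_⟩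
  have hpow : 1 ≤ (1 + norm1 n) ^ k := one_le_pow₀ (le_add_of_nonneg_right (norm1_nonneg n))
  calc ‖u n‖ ≤ M * (1 + norm1 n) ^ k + c * 1 := by linarith [hu n, haM n]
    _ ≤ (M + c) * (1 + norm1 n) ^ k := by nlinarith

lemma polyGrowth_inv_of_latticeWeight_le {d : ℕ} {u : (Fin d → ℤ) → ℂ} {c : ℝ} (hc : 0 < c)
    (hu : ∀ n, c * latticeWeight n ≤ ‖u n‖) : PolyGrowth fun n => (u n)⁻¹ := by
  refine ⟨c⁻¹, inv_pos.mpr hc, 2 * d, fun n => ?_⟩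
  have hcw : 0 < c * latticeWeight n := mul_pos hc (latticeWeight_pos n)
  calc ‖(u n)⁻¹‖ ≤ (c * latticeWeight n)⁻¹ := by rw [norm_inv]; exact inv_anti₀ hcw (hu n)
    _ = c⁻¹ * (latticeWeight n)⁻¹ := mul_inv c _
    _ ≤ c⁻¹ * (1 + norm1 n) ^ (2 * d) := by gcongr; exact inv_latticeWeight_le n

lemma IsInvertibleSprime.of_latticeWeight_le {d : ℕ} {u : (Fin d → ℤ) → ℂ} {c : ℝ}
    (hu : PolyGrowth u) (hc : 0 < c) (hcu : ∀ n, c * latticeWeight n ≤ ‖u n‖) :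
    IsInvertibleSprime u := by
  have hu₀ : ∀ n, u n ≠ 0 := fun n h =>
    (mul_pos hc (latticeWeight_pos n)).not_ge (by simpa [h] using hcu n)
  exact ⟨hu, _, polyGrowth_inv_of_latticeWeight_le hc hcu, fun n => mul_inv_cancel₀ (hu₀ n)⟩

noncomputable def padSmall (t : ℝ) (z : ℂ) : ℂ := if t ≤ ‖z‖ then z else t

section padSmall

variable {t : ℝ} (z : ℂ)

lemma le_norm_padSmall (ht : 0 ≤ t) : t ≤ ‖padSmall t z‖ := by
  unfold padSmall
  split_ifs with h
  · exact h
  · simp [abs_of_nonneg ht]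

lemma norm_padSmall_le (ht : 0 ≤ t) : ‖padSmall t z‖ ≤ ‖z‖ + t := by
  unfold padSmall
  split_ifs
  · linarith
  · simp [abs_of_nonneg ht]

lemma norm_padSmall_sub_le (ht : 0 ≤ t) : ‖padSmall t z - z‖ ≤ 2 * t := by
  unfold padSmall
  split_ifs with h
  · simp [ht]
  · calc ‖(t : ℂ) - z‖ ≤ ‖(t : ℂ)‖ + ‖z‖ := norm_sub_le _ _
      _ ≤ 2 * t := by simp [abs_of_nonneg ht]; linarith

end padSmall

lemma exists_isInvertibleSprime_norm_sub_le {d : ℕ} {a : (Fin d → ℤ) → ℂ} (ha : PolyGrowth a)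
    {c : ℝ} (hc : 0 < c) :
    ∃ u, IsInvertibleSprime u ∧ ∀ n, ‖u n - a n‖ ≤ c * latticeWeight n := by
  set t : (Fin d → ℤ) → ℝ := fun n => c / 2 * latticeWeight n
  have ht : ∀ n, 0 ≤ t n := fun n => by positivity [latticeWeight_pos n]
  have ht_le : ∀ n, t n ≤ c / 2 := fun n =>
    mul_le_of_le_one_right (by positivity) (latticeWeight_le_one n)
  refine ⟨fun n => padSmall (t n) (a n),
    .of_latticeWeight_le (ha.of_norm_le_add (by positivity) fun n => ?_) (half_pos hc)
      fun n => le_norm_padSmall _ (ht n), fun n => ?_⟩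
  · exact (norm_padSmall_le _ (ht n)).trans (by linarith [ht_le n])
  · exact (norm_padSmall_sub_le _ (ht n)).trans_eq (by ring)

lemma RapidDecay.exists_norm_le {d : ℕ} {b : (Fin d → ℤ) → ℂ} (hb : RapidDecay b) :
    ∃ C, ∀ n, ‖b n‖ ≤ C := by
  simpa using hb 0

lemma norm_tsum_mul_le_of_le {ι R : Type*} [NormedRing R] {f g : ι → R} {w : ι → ℝ} {C : ℝ}
    (hw : Summable w) (hf : ∀ i, ‖f i‖ ≤ w i) (hg : ∀ i, ‖g i‖ ≤ C) :
    ‖∑' i, f i * g i‖ ≤ C * ∑' i, w i :=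
  tsum_of_norm_bounded (hw.hasSum.mul_left C) fun i => calc
    ‖f i * g i‖ ≤ ‖f i‖ * ‖g i‖ := norm_mul_le _ _
    _ ≤ w i * C := mul_le_mul (hf i) (hg i) (norm_nonneg _) ((norm_nonneg _).trans (hf i))
    _ = C * w i := mul_comm _ _

theorem units_weakstar_dense_general (d m : ℕ)
    (a : (Fin d → ℤ) → ℂ) (ha : PolyGrowth a)
    (b : Fin m → (Fin d → ℤ) → ℂ) (hb : ∀ j, RapidDecay (b j))
    (ε : ℝ) (hε : 0 < ε) :
    ∃ u : (Fin d → ℤ) → ℂ, IsInvertibleSprime u ∧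
      ∀ j : Fin m, ‖∑' n : Fin d → ℤ, (u n - a n) * b j n‖ < ε := by
  obtain ⟨C, hC⟩ : ∃ C, ∀ j n, ‖b j n‖ ≤ C := by
    choose C hC using fun j => (hb j).exists_norm_le
    obtain ⟨B, hB⟩ := Finite.exists_le C
    exact ⟨B, fun j n => (hC j n).trans (hB j)⟩
  obtain ⟨c, hc, hcε⟩ := exists_pos_mul_lt hε (C * ∑' n : Fin d → ℤ, latticeWeight n)
  obtain ⟨u, hu, hua⟩ := exists_isInvertibleSprime_norm_sub_le ha hc
  refine ⟨u, hu, fun j => ?_⟩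
  calc ‖∑' n, (u n - a n) * b j n‖ ≤ C * ∑' n, c * latticeWeight n :=
        norm_tsum_mul_le_of_le ((summable_latticeWeight d).mul_left c) hua (hC j)
    _ = C * (∑' n, latticeWeight n) * c := by rw [tsum_mul_left]; ring
    _ < ε := hcε

/-- The invertible elements of `s'(ℤ^d)` are dense in the weak-* topology:
the topological stable rank of `s'(ℤ^d)` is one. -/
theorem units_weakstar_dense (d m : ℕ) (hd : 1 ≤ d)
    (a : (Fin d → ℤ) → ℂ) (ha : PolyGrowth a)
    (b : Fin m → (Fin d → ℤ) → ℂ) (hb : ∀ j, RapidDecay (b j))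
    (ε : ℝ) (hε : 0 < ε) :
    ∃ u : (Fin d → ℤ) → ℂ, IsInvertibleSprime u ∧
      ∀ j : Fin m, ‖∑' n : Fin d → ℤ, (u n - a n) * b j n‖ < ε :=
  units_weakstar_dense_general d m a ha b hb ε hε
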